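/- arXiv:math/0302081 — 2 statements merged into one kernel-verified Lean document; each statement's English description precedes it below -/
import Mathlib

section
/- For complex projective space ℙ^v with the Fubini–Study metric, the form H_Y(W,Z) = ⟨R(Y,JY)W, JZ⟩ is positive definite on the holomorphic tangent space for every nonzero Y; hence the complex positivity of ℙ^v equals v. -/
open RealInnerProductSpace

/-- For the Fubini–Study curvature tensor (constant holomorphic sectional curvature `c > 0`)
on the tangent space of `ℙ^v`, the form `H_Y(W,Z) = ⟨R(Y,JY)W,JZ⟩` is positive definite
for every `Y ≠ 0`: `H_Y(W,W) > 0` for all `W ≠ 0` and `H_Y` has trivial null space,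
so the complex positivity of `ℙ^v` equals `v` (the full complex dimension). -/
theorem stmt_4 {T : Type*} [NormedAddCommGroup T] [InnerProductSpace ℝ T]
    [FiniteDimensional ℝ T] (v : ℕ) (hT : Module.finrank ℝ T = 2 * v)
    (J : T →ₗ[ℝ] T) (hJ2 : ∀ x, J (J x) = -x)
    (hJiso : ∀ x y, ⟪J x, J y⟫ = ⟪x, y⟫)
    (c : ℝ) (hc : 0 < c) (R : T → T → T → T)
    (hR : ∀ X Y Z W, ⟪R X Y Z, W⟫ =
      c * (⟪X, Z⟫ * ⟪Y, W⟫ - ⟪X, W⟫ * ⟪Y, Z⟫ + ⟪X, J Z⟫ * ⟪Y, J W⟫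
        - ⟪X, J W⟫ * ⟪Y, J Z⟫ + 2 * ⟪X, J Y⟫ * ⟪Z, J W⟫)) :
    ∀ Y : T, Y ≠ 0 →
      (∀ W : T, W ≠ 0 → 0 < ⟪R Y (J Y) W, J W⟫) ∧
      {W : T | ∀ Z : T, ⟪R Y (J Y) W, J Z⟫ = 0} = {0} := by
  have hskew : ∀ x y : T, ⟪J x, y⟫ = -⟪x, J y⟫ := by
    intro x y
    have h := hJiso x (J y)
    rw [hJ2, inner_neg_right] at h
    linarith
  intro Y hY
  have hYpos : 0 < ⟪Y, Y⟫ := by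
    rw [real_inner_self_eq_norm_mul_norm]
    exact mul_pos (norm_pos_iff.mpr hY) (norm_pos_iff.mpr hY)
  have hkey : ∀ W Z : T, ⟪R Y (J Y) W, J Z⟫ =
      2 * c * (⟪Y, W⟫ * ⟪Y, Z⟫ + ⟪Y, J W⟫ * ⟪Y, J Z⟫ + ⟪Y, Y⟫ * ⟪W, Z⟫) := by
    intro W Z
    rw [hR]
    simp only [hJ2, map_neg, inner_neg_right, inner_neg_left, hJiso, hskew]
    ring
  have hpos : ∀ W : T, W ≠ 0 → 0 < ⟪R Y (J Y) W, J W⟫ := by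
    intro W hW
    rw [hkey]
    have hWpos : 0 < ⟪W, W⟫ := by
      rw [real_inner_self_eq_norm_mul_norm]
      exact mul_pos (norm_pos_iff.mpr hW) (norm_pos_iff.mpr hW)
    nlinarith [sq_nonneg ⟪Y, W⟫, sq_nonneg ⟪Y, J W⟫, mul_pos hYpos hWpos]
  refine ⟨hpos, ?_⟩
  ext W
  simp only [Set.mem_setOf_eq, Set.mem_singleton_iff]
  constructor
  · intro h
    by_contra hW
    exact absurd (h W) (ne_of_gt (hpos W hW))
  · intro h Z
    subst h
    rw [hkey]
    simp
end

section
/- For the complex Grassmannian Gr(p, p+q; ℂ), viewed as a Hermitian symmetric space, the complex positivity ℓ (minimum over nonzero tangent vectors Y of the rank of H_Y(W,Z) = ⟨R(Y,JY)W,JZ⟩ on the holomorphic tangent space) equals p + q - 1. -/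
open Matrix

/-- The tangent space of `Gr(p, p+q; ℂ)`: `q × p` complex matrices. -/
abbrev Mat (p q : ℕ) : Type := Matrix (Fin q) (Fin p) ℂ

/-- The curvature tensor of the complex Grassmannian `Gr(p, p+q; ℂ)` in matrix form:
`R(X,Y)Z = -(XY*Z + ZY*X) + (YX*Z + ZX*Y)`. -/
noncomputable def grassCurv {p q : ℕ} (X Y Z : Mat p q) : Mat p q :=
  -(X * Yᴴ * Z + Z * Yᴴ * X) + (Y * Xᴴ * Z + Z * Xᴴ * Y)

/-- The form `H_Y(W, Z) = ⟨R(Y, JY)W, JZ⟩` on the holomorphic tangent space, as a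
`ℂ`-linear functional in `W` for each fixed `Z` (here `J` is multiplication by `i` and
the Hermitian extension of the metric `⟨A,B⟩ = Re tr(AB*)` is `tr(AB*)`). -/
noncomputable def grassH {p q : ℕ} (Y Z : Mat p q) : (Mat p q) →ₗ[ℂ] ℂ where
  toFun W := Matrix.trace (grassCurv Y (Complex.I • Y) W * (Complex.I • Z)ᴴ)
  map_add' W₁ W₂ := by
    simp [grassCurv, Matrix.mul_add, Matrix.add_mul, Matrix.neg_mul,
      Matrix.trace_add, Matrix.trace_neg]
    ring
  map_smul' c W := by
    simp [grassCurv, Matrix.mul_smul, Matrix.smul_mul, Matrix.add_mul, Matrix.neg_mul,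
      Matrix.trace_add, Matrix.trace_neg, Matrix.trace_smul, smul_smul, smul_add,
      smul_neg]
    ring_nf
    simp [Complex.I_sq]

/-- The null space of the form `H_Y` on the holomorphic tangent space. -/
noncomputable def grassNull {p q : ℕ} (Y : Mat p q) : Submodule ℂ (Mat p q) :=
  ⨅ Z : Mat p q, LinearMap.ker (grassH Y Z)

/-- The complex rank `ℓ(Y)` of `H_Y` on the holomorphic tangent space
(of complex dimension `p q`). -/
noncomputable def grassRank {p q : ℕ} (Y : Mat p q) : ℕ :=
  p * q - Module.finrank ℂ (grassNull Y)

/-!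
Since `R(Y, iY) W = 2i (Y Yᴴ W + W Yᴴ Y)` and the trace pairing is nondegenerate, the null space
of `H_Y` is the kernel of this Sylvester operator; pairing its equation with `W` gives
`‖Yᴴ W‖² + ‖W Yᴴ‖² = 0`, so the null space is `{W | Yᴴ W = 0, W Yᴴ = 0}`. If `Y a b ≠ 0`, such
a `W` that vanishes off row `a` and column `b` is zero, so the null space embeds into the
`(q - 1) × (p - 1)` minors and `ℓ(Y) ≥ pq - (q - 1)(p - 1) = p + q - 1`. For `Y = E_ab` the null
space consists exactly of the matrices vanishing on row `a` and column `b`, so the bound is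
attained.
-/

theorem Nat.mul_sub_sub_one_mul_sub_one {p q : ℕ} (hp : 0 < p) (hq : 0 < q) :
    p * q - (q - 1) * (p - 1) = p + q - 1 := by
  obtain ⟨p, rfl⟩ := Nat.exists_eq_add_one_of_ne_zero hp.ne'
  obtain ⟨q, rfl⟩ := Nat.exists_eq_add_one_of_ne_zero hq.ne'
  simp only [Nat.add_sub_cancel]
  rw [show (p + 1) * (q + 1) = q * p + (p + q + 1) by ring]
  omega

namespace Matrix

variable {m n K : Type*}

section RCLike

variable [Fintype m] [Fintype n] {𝕜 : Type*} [RCLike 𝕜]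

open scoped ComplexOrder

theorem eq_zero_of_forall_trace_mul_conjTranspose_eq_zero {M : Matrix m n 𝕜}
    (h : ∀ Z : Matrix m n 𝕜, trace (M * Zᴴ) = 0) : M = 0 :=
  trace_mul_conjTranspose_self_eq_zero_iff.mp (h M)

theorem mul_conjTranspose_mul_add_mul_conjTranspose_mul_eq_zero_iff {Y W : Matrix m n 𝕜} :
    Y * Yᴴ * W + W * (Yᴴ * Y) = 0 ↔ Yᴴ * W = 0 ∧ W * Yᴴ = 0 := by
  refine ⟨fun h => ?_, fun ⟨h₁, h₂⟩ => by
    rw [Matrix.mul_assoc, h₁, ← Matrix.mul_assoc, h₂, Matrix.mul_zero, Matrix.zero_mul, add_zero]⟩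
  have hsum : trace ((Yᴴ * W)ᴴ * (Yᴴ * W)) + trace ((W * Yᴴ)ᴴ * (W * Yᴴ)) = 0 := by
    have e₁ : Wᴴ * (Y * Yᴴ * W) = (Yᴴ * W)ᴴ * (Yᴴ * W) := by
      simp only [conjTranspose_mul, conjTranspose_conjTranspose, Matrix.mul_assoc]
    have e₂ : trace (Wᴴ * (W * (Yᴴ * Y))) = trace ((W * Yᴴ)ᴴ * (W * Yᴴ)) := by
      rw [← Matrix.mul_assoc, ← Matrix.mul_assoc, trace_mul_comm]
      simp only [conjTranspose_mul, conjTranspose_conjTranspose, Matrix.mul_assoc]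
    simpa only [Matrix.mul_add, trace_add, Matrix.mul_zero, trace_zero, e₁, e₂] using
      congrArg (fun M => trace (Wᴴ * M)) h
  rw [add_eq_zero_iff_of_nonneg (posSemidef_conjTranspose_mul_self _).trace_nonneg
    (posSemidef_conjTranspose_mul_self _).trace_nonneg] at hsum
  exact ⟨trace_conjTranspose_mul_self_eq_zero_iff.mp hsum.1,
    trace_conjTranspose_mul_self_eq_zero_iff.mp hsum.2⟩

end RCLike

theorem eq_zero_of_conjTranspose_mul_eq_zero_of_mul_conjTranspose_eq_zero [Fintype m] [Fintype n]
    [Field K] [StarRing K] {Y W : Matrix m n K} {a : m} {b : n} (hY : Y a b ≠ 0)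
    (h₁ : Yᴴ * W = 0) (h₂ : W * Yᴴ = 0) (hW : ∀ i j, i ≠ a → j ≠ b → W i j = 0) :
    W = 0 := by
  have hY' : star (Y a b) ≠ 0 := star_ne_zero.mpr hY
  have hrow : ∀ j, j ≠ b → W a j = 0 := fun j hj => by
    have := congrFun₂ h₁ b j
    rw [mul_apply, Fintype.sum_eq_single a fun i hi => by rw [hW i j hi hj, mul_zero]] at this
    simpa [hY'] using this
  have hcol : ∀ i, i ≠ a → W i b = 0 := fun i hi => by
    have := congrFun₂ h₂ i a
    rw [mul_apply, Fintype.sum_eq_single b fun j hj => by rw [hW i j hi hj, zero_mul]] at this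
    simpa [hY'] using this
  have hcorner : W a b = 0 := by
    have := congrFun₂ h₁ b b
    rw [mul_apply, Fintype.sum_eq_single a fun i hi => by rw [hcol i hi, mul_zero]] at this
    simpa [hY'] using this
  ext i j
  by_cases hi : i = a <;> by_cases hj : j = b
  · subst hi hj; exact hcorner
  · subst hi; exact hrow j hj
  · subst hj; exact hcol i hi
  · exact hW i j hi hj

def deleteRowColLinearMap [Semiring K] (a : m) (b : n) :
    Matrix m n K →ₗ[K] Matrix {i // i ≠ a} {j // j ≠ b} K where
  toFun W := W.submatrix (↑) (↑)
  map_add' _ _ := rfl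
  map_smul' _ _ := rfl

@[simp]
theorem deleteRowColLinearMap_apply [Semiring K] (a : m) (b : n) (W : Matrix m n K)
    (i : {i // i ≠ a}) (j : {j // j ≠ b}) : deleteRowColLinearMap a b W i j = W i j :=
  rfl

theorem finrank_le_of_forall_eq_zero_of_deleteRowCol [Fintype m] [Fintype n] [DecidableEq m]
    [DecidableEq n] [Field K] (a : m) (b : n) (N : Submodule K (Matrix m n K))
    (hN : ∀ W ∈ N, (∀ i j, i ≠ a → j ≠ b → W i j = 0) → W = 0) :
    Module.finrank K N ≤ (Fintype.card m - 1) * (Fintype.card n - 1) := by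
  have hinj : Function.Injective ((deleteRowColLinearMap a b).domRestrict N) := by
    rw [← LinearMap.ker_eq_bot, LinearMap.ker_eq_bot']
    rintro ⟨W, hW⟩ h0
    exact Subtype.ext (hN W hW fun i j hi hj => congrFun₂ h0 ⟨i, hi⟩ ⟨j, hj⟩)
  simpa [Module.finrank_matrix, Fintype.card_subtype_compl] using
    LinearMap.finrank_le_finrank_of_injective hinj

end Matrix

section Grassmannian

variable {p q : ℕ}

theorem grassCurv_I_smul_self (Y W : Mat p q) :
    grassCurv Y (Complex.I • Y) W = (2 * Complex.I) • (Y * Yᴴ * W + W * (Yᴴ * Y)) := by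
  simp only [grassCurv, conjTranspose_smul, Matrix.mul_smul, Matrix.smul_mul, Complex.star_def,
    Complex.conj_I, Matrix.mul_assoc]
  module

theorem grassH_apply (Y Z W : Mat p q) :
    grassH Y Z W = 2 * trace ((Y * Yᴴ * W + W * (Yᴴ * Y)) * Zᴴ) := by
  change trace (grassCurv Y (Complex.I • Y) W * (Complex.I • Z)ᴴ) = _
  rw [grassCurv_I_smul_self]
  simp only [conjTranspose_smul, Matrix.smul_mul, Matrix.mul_smul, Complex.star_def,
    Complex.conj_I, trace_smul, smul_smul, smul_eq_mul]
  ring_nf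
  simp [Complex.I_sq]

theorem mem_grassNull_iff {Y W : Mat p q} :
    W ∈ grassNull Y ↔ Yᴴ * W = 0 ∧ W * Yᴴ = 0 := by
  simp only [grassNull, Submodule.mem_iInf, LinearMap.mem_ker, grassH_apply, mul_eq_zero,
    two_ne_zero, false_or]
  exact ⟨fun h => mul_conjTranspose_mul_add_mul_conjTranspose_mul_eq_zero_iff.mp
      (eq_zero_of_forall_trace_mul_conjTranspose_eq_zero h),
    fun h Z => by rw [mul_conjTranspose_mul_add_mul_conjTranspose_mul_eq_zero_iff.mpr h,
      Matrix.zero_mul, trace_zero]⟩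

theorem finrank_grassNull_le {Y : Mat p q} {a : Fin q} {b : Fin p} (hY : Y a b ≠ 0) :
    Module.finrank ℂ (grassNull Y) ≤ (q - 1) * (p - 1) := by
  simpa using finrank_le_of_forall_eq_zero_of_deleteRowCol a b (grassNull Y) fun W hW =>
    (mem_grassNull_iff.mp hW).elim
      (eq_zero_of_conjTranspose_mul_eq_zero_of_mul_conjTranspose_eq_zero hY)

theorem mem_grassNull_single_iff {a : Fin q} {b : Fin p} {W : Mat p q} :
    W ∈ grassNull (single a b 1) ↔ (∀ j, W a j = 0) ∧ ∀ i, W i b = 0 := by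
  rw [mem_grassNull_iff, conjTranspose_single, star_one]
  refine and_congr ⟨fun h j => by simpa using congrFun₂ h b j, fun h => ?_⟩
    ⟨fun h i => by simpa using congrFun₂ h i a, fun h => ?_⟩
  · ext i j
    by_cases hi : i = b
    · subst hi; simp [h]
    · simp [single_mul_apply_of_ne _ _ _ _ _ hi]
  · ext i j
    by_cases hj : j = a
    · subst hj; simp [h]
    · simp [mul_single_apply_of_ne _ _ _ _ _ hj]

theorem finrank_grassNull_single (a : Fin q) (b : Fin p) :
    Module.finrank ℂ (grassNull (single a b 1 : Mat p q)) = (q - 1) * (p - 1) := by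
  refine le_antisymm (finrank_grassNull_le (a := a) (b := b) (by simp)) ?_
  have hsurj : Function.Surjective
      ((deleteRowColLinearMap a b).domRestrict (grassNull (single a b 1 : Mat p q))) := by
    intro M
    let W : Mat p q := of fun i j => if h : i ≠ a ∧ j ≠ b then M ⟨i, h.1⟩ ⟨j, h.2⟩ else 0
    refine ⟨⟨W, mem_grassNull_single_iff.mpr ⟨fun j => by simp [W], fun i => by simp [W]⟩⟩, ?_⟩
    ext i j
    simp [W, i.2, j.2]
  simpa [Module.finrank_matrix, Fintype.card_subtype_compl] using
    LinearMap.finrank_le_finrank_of_surjective hsurj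

theorem le_grassRank {Y : Mat p q} (hY : Y ≠ 0) : p + q - 1 ≤ grassRank Y := by
  obtain ⟨a, b, hab⟩ : ∃ a b, Y a b ≠ 0 := by
    by_contra! h
    exact hY (ext h)
  calc p + q - 1 = p * q - (q - 1) * (p - 1) := (Nat.mul_sub_sub_one_mul_sub_one b.pos a.pos).symm
    _ ≤ grassRank Y := Nat.sub_le_sub_left (finrank_grassNull_le hab) _

theorem grassRank_single (a : Fin q) (b : Fin p) :
    grassRank (single a b 1 : Mat p q) = p + q - 1 := by
  rw [grassRank, finrank_grassNull_single, Nat.mul_sub_sub_one_mul_sub_one b.pos a.pos]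

end Grassmannian

/-- The complex positivity `ℓ` of the complex Grassmannian `Gr(p, p+q; ℂ)`, the minimum
over nonzero tangent vectors `Y` of the rank of `H_Y(W,Z) = ⟨R(Y,JY)W,JZ⟩`, equals
`p + q - 1`. -/
theorem stmt_18 (p q : ℕ) (hp : 0 < p) (hq : 0 < q) :
    sInf {n : ℕ | ∃ Y : Mat p q, Y ≠ 0 ∧ n = grassRank Y} = p + q - 1 := by
  have hsingle : (single ⟨0, hq⟩ ⟨0, hp⟩ 1 : Mat p q) ≠ 0 := fun h => by
    simpa using congrFun₂ h ⟨0, hq⟩ ⟨0, hp⟩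
  refine IsLeast.csInf_eq ⟨⟨_, hsingle, (grassRank_single _ _).symm⟩, ?_⟩
  rintro _ ⟨Y, hY, rfl⟩
  exact le_grassRank hY
end
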